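/- arXiv:0906.0693 — 2 statements merged into one kernel-verified Lean document; each statement's English description precedes it below -/
import Mathlib

section
/- Let A, B be disjoint nonempty finsets with Γ = A ∪ B and |Γ| = 5, and for v ∈ {<, =, >} let N_v denote the number of subsets X ⊆ Γ whose outcome under the weighing (A, B) is v. Then max{N_<, N_>} ≥ 16. -/
/-!
Writing `X ⊆ A ∪ B` as `(X ∩ A) ∪ (X ∩ B)` identifies such subsets with pairs of subsets of
`A` and `B`, so the number of `X` with outcome `v` depends only on `a = |A|` and `b = |B|`:
it is `∑ C(a, i) C(b, j)` over the pairs `i ≤ a`, `j ≤ b` with `compare i j = v`.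
For `a + b = 5` the six cases are then a finite computation; the extremal one is
`(a, b) = (2, 3)`, where `N_< = 7 + 8 + 1 = 16`.
-/

/-- The outcome of the weighing `(L, R)` on the set `X` of fake (heavier) coins:
the comparison sign obtained by comparing `|X ∩ L|` with `|X ∩ R|`. -/
def weighOutcome {α : Type*} [DecidableEq α] (L R X : Finset α) : Ordering :=
  compare (X ∩ L).card (X ∩ R).card

open Finset

def outcomeCount (a b : ℕ) (v : Ordering) : ℕ :=
  ∑ i ∈ range (a + 1), ∑ j ∈ range (b + 1), if compare i j = v then a.choose i * b.choose j else 0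

section
variable {α : Type*} [DecidableEq α] {A B S T : Finset α}

theorem union_inter_eq_left_of_disjoint (hAB : Disjoint A B) (hS : S ⊆ A) (hT : T ⊆ B) :
    (S ∪ T) ∩ A = S := by
  rw [union_inter_distrib_right, inter_eq_left.2 hS,
    disjoint_iff_inter_eq_empty.1 (hAB.symm.mono_left hT), union_empty]

theorem card_filter_powerset_union_eq_card_filter_product (hAB : Disjoint A B)
    (p : Finset α → Finset α → Prop) [∀ S T, Decidable (p S T)] :
    #{X ∈ (A ∪ B).powerset | p (X ∩ A) (X ∩ B)} =
      #{ST ∈ A.powerset ×ˢ B.powerset | p ST.1 ST.2} := by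
  have hA : ∀ {S T}, S ⊆ A → T ⊆ B → (S ∪ T) ∩ A = S :=
    union_inter_eq_left_of_disjoint hAB
  have hB : ∀ {S T}, S ⊆ A → T ⊆ B → (S ∪ T) ∩ B = T := fun hS hT => by
    rw [union_comm, union_inter_eq_left_of_disjoint hAB.symm hT hS]
  refine card_nbij' (fun X => (X ∩ A, X ∩ B)) (fun ST => ST.1 ∪ ST.2) ?_ ?_ ?_ ?_
  · intro X hX
    simp only [coe_filter, mem_powerset, Set.mem_ofPred_eq, mem_product] at hX ⊢
    exact ⟨⟨inter_subset_right, inter_subset_right⟩, hX.2⟩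
  · rintro ⟨S, T⟩ hST
    simp only [coe_filter, mem_powerset, Set.mem_ofPred_eq, mem_product] at hST ⊢
    obtain ⟨⟨hS, hT⟩, hp⟩ := hST
    exact ⟨union_subset_union hS hT, by rwa [hA hS hT, hB hS hT]⟩
  · intro X hX
    simp only [coe_filter, mem_powerset, Set.mem_ofPred_eq] at hX
    exact (inter_union_distrib_left X A B).symm.trans (inter_eq_left.2 hX.1)
  · rintro ⟨S, T⟩ hST
    simp only [coe_filter, mem_powerset, Set.mem_ofPred_eq, mem_product] at hST
    obtain ⟨⟨hS, hT⟩, -⟩ := hST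
    exact Prod.ext (hA hS hT) (hB hS hT)

theorem card_filter_weighOutcome_eq (hAB : Disjoint A B) (v : Ordering) :
    #{X ∈ (A ∪ B).powerset | weighOutcome A B X = v} = outcomeCount #A #B v := by
  unfold weighOutcome
  rw [card_filter_powerset_union_eq_card_filter_product hAB (fun S T => compare #S #T = v),
    card_filter, sum_product, sum_congr rfl fun S _ =>
      sum_powerset_apply_card (fun j => if compare #S j = v then 1 else 0),
    sum_powerset_apply_card
      (fun i => ∑ j ∈ range (#B + 1), (#B).choose j • if compare i j = v then 1 else 0)]
  simp only [outcomeCount, smul_eq_mul, mul_sum, mul_ite, mul_one, mul_zero]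

end

theorem sixteen_le_max_outcomeCount_of_add_eq_five {a b : ℕ} (h : a + b = 5) :
    16 ≤ max (outcomeCount a b .lt) (outcomeCount a b .gt) := by
  obtain rfl : b = 5 - a := by omega
  have : a ≤ 5 := by omega
  interval_cases a <;> decide

theorem max_outcome_count_five_general {α : Type*} [DecidableEq α]
    (A B : Finset α) (hAB : Disjoint A B)
    (Γ : Finset α) (hΓ : Γ = A ∪ B) (hcard : Γ.card = 5)
    (N : Ordering → ℕ)
    (hN : ∀ v, N v = (Γ.powerset.filter (fun X => weighOutcome A B X = v)).card) :
    16 ≤ max (N .lt) (N .gt) := by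
  subst hΓ
  rw [hN, hN, card_filter_weighOutcome_eq hAB, card_filter_weighOutcome_eq hAB]
  exact sixteen_le_max_outcomeCount_of_add_eq_five (card_union_of_disjoint hAB ▸ hcard)

/-- Let `A, B` be disjoint nonempty finsets with `Γ = A ∪ B` and `|Γ| = 5`, and for
`v ∈ {<, =, >}` let `N v` be the number of subsets `X ⊆ Γ` whose outcome under the
weighing `(A, B)` is `v`.  Then `max {N <, N >} ≥ 16`. -/
theorem max_outcome_count_five {α : Type*} [DecidableEq α]
    (A B : Finset α) (hAB : Disjoint A B) (hA : A.Nonempty) (hB : B.Nonempty)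
    (Γ : Finset α) (hΓ : Γ = A ∪ B) (hcard : Γ.card = 5)
    (N : Ordering → ℕ)
    (hN : ∀ v, N v = (Γ.powerset.filter (fun X => weighOutcome A B X = v)).card) :
    16 ≤ max (N .lt) (N .gt) :=
  max_outcome_count_five_general A B hAB Γ hΓ hcard N hN
end

section
/- Let S be a finite set with |S| = n, and let (A, B) and (L, R) be any two weighings on S. Then there exist v₁, v₂ ∈ {<, =, >} such that 128 times the number of subsets X ⊆ S whose outcome under (A, B) is v₁ and whose outcome under (L, R) is v₂ is at least 15 · 2^n. -/
open Finset

namespace Multiset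

theorem powerset_map {β γ : Type*} (f : β → γ) (m : Multiset β) :
    (m.map f).powerset = m.powerset.map (map f) := by
  induction m using Multiset.induction with
  | empty => simp
  | cons a m ih => simp [powerset_cons, ih, map_map]

theorem eq_sum_count_nsmul_of_toFinset_subset {β : Type*} [DecidableEq β] {m : Multiset β}
    {G : Finset β} (h : m.toFinset ⊆ G) : m = ∑ v ∈ G, m.count v • {v} := by
  conv_lhs => rw [← toFinset_sum_count_nsmul_eq m]
  exact Finset.sum_subset h fun v _ hv => by rw [count_eq_zero.mpr (by simpa using hv), zero_nsmul]

theorem countP_replicate {β : Type*} (p : β → Prop) [DecidablePred p] (n : ℕ) (b : β) :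
    (replicate n b).countP p = if p b then n else 0 := by
  simp [← coe_replicate, List.countP_replicate]

variable {M : Type*} [AddCommMonoid M]

def subsetSums (m : Multiset M) : Multiset M := m.powerset.map sum

theorem subsetSums_cons (a : M) (m : Multiset M) :
    subsetSums (a ::ₘ m) = subsetSums m + (subsetSums m).map (a + ·) := by
  simp [subsetSums, powerset_cons, map_map]

theorem card_filter_subsetSums_replicate_zero_add (k : ℕ) (m : Multiset M) (p : M → Prop)
    [DecidablePred p] :
    card ((subsetSums (replicate k 0 + m)).filter p) = 2 ^ k * card ((subsetSums m).filter p) := by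
  induction k with
  | zero => simp
  | succ k ih =>
    rw [replicate_succ, cons_add, subsetSums_cons]
    simp only [zero_add, map_id', filter_add, card_add, ih]
    ring

end Multiset

namespace Finset

theorem powerset_val_map_sum {α M : Type*} [AddCommMonoid M] (S : Finset α) (w : α → M) :
    S.powerset.val.map (fun X => ∑ x ∈ X, w x) = (S.val.map w).subsetSums := by
  rw [Multiset.subsetSums, Multiset.powerset_map, Multiset.map_map, Finset.powerset,
    Multiset.map_pmap]
  exact Multiset.pmap_eq_map _ (Multiset.sum ∘ Multiset.map w) _ _

theorem card_filter_powerset_sum {α M : Type*} [AddCommMonoid M] (S : Finset α) (w : α → M)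
    (p : M → Prop) [DecidablePred p] :
    #{X ∈ S.powerset | p (∑ x ∈ X, w x)} = Multiset.card ((S.val.map w).subsetSums.filter p) := by
  rw [← powerset_val_map_sum, Multiset.filter_map, Multiset.card_map]
  rfl

theorem card_eq_card_filter_lt_add_eq_add_gt {β : Type*} (s : Finset β) (f : β → Ordering) :
    #s = #{x ∈ s | f x = .lt} + #{x ∈ s | f x = .eq} + #{x ∈ s | f x = .gt} := by
  classical
  rw [card_eq_sum_card_fiberwise (f := f) (t := univ) fun _ _ => mem_univ _]
  simp [Finset.univ, Fintype.elems, add_assoc]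

theorem card_filter_powerset_card_inter_eq {α : Type*} [DecidableEq α] {S T : Finset α}
    (hT : T ⊆ S) (k : ℕ) :
    #{Y ∈ S.powerset | #(Y ∩ T) = k} = (#T).choose k * 2 ^ (#S - #T) := by
  rw [← card_sdiff_of_subset hT, ← card_powerset, ← card_powersetCard, ← card_product]
  have split : ∀ {P Q : Finset α}, P ⊆ T → Disjoint Q T → (P ∪ Q) ∩ T = P ∧ (P ∪ Q) \ T = Q :=
    fun hP hQ =>
      ⟨by rw [union_inter_distrib_right, inter_eq_left.mpr hP,
          disjoint_iff_inter_eq_empty.mp hQ, union_empty],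
        by rw [union_sdiff_distrib, sdiff_eq_empty_iff_subset.mpr hP, empty_union,
          hQ.sdiff_eq_left]⟩
  refine card_nbij' (fun Y => (Y ∩ T, Y \ T)) (fun P => P.1 ∪ P.2) ?_ ?_ ?_ ?_ <;>
    simp only [Set.MapsTo, Set.LeftInvOn, Set.RightInvOn, mem_coe, mem_filter, mem_powerset,
      mem_product, mem_powersetCard, subset_sdiff, Prod.forall, and_imp]
  · exact fun Y hY hk =>
      ⟨⟨inter_subset_right, hk⟩, sdiff_subset.trans hY, disjoint_sdiff_self_left⟩
  · intro P Q hP hk hQS hQ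
    rw [(split hP hQ).1]
    exact ⟨union_subset (hP.trans hT) hQS, hk⟩
  · exact fun Y _ _ => sup_inf_sdiff Y T
  · intro P Q hP _ _ hQ
    rw [(split hP hQ).1, (split hP hQ).2]

end Finset

namespace Nat

theorem centralBinom_succ_le_four_mul (n : ℕ) : (n + 1).centralBinom ≤ 4 * n.centralBinom := by
  have h := succ_mul_centralBinom_succ n
  refine le_of_mul_le_mul_left (?_ : (n + 1) * _ ≤ (n + 1) * _) n.succ_pos
  nlinarith

theorem centralBinom_mul_le_of_four_le {n : ℕ} (hn : 4 ≤ n) :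
    128 * n.centralBinom ≤ 35 * 4 ^ n := by
  induction n, hn using le_induction with
  | base => decide
  | succ n _ ih =>
    have := n.centralBinom_succ_le_four_mul
    rw [pow_succ]
    omega

theorem eq_three_of_centralBinom_bounds {n : ℕ} (hlow : 38 * 4 ^ n < 128 * n.centralBinom)
    (hhigh : 128 * n.centralBinom < 45 * 4 ^ n) : n = 3 := by
  by_contra hn
  rcases lt_or_ge n 4 with h | h
  · interval_cases n <;> simp_all [centralBinom, choose]
  · have := centralBinom_mul_le_of_four_le h
    omega

end Nat

def pairSigns (s : (ℕ × ℕ) × (ℕ × ℕ)) : Ordering × Ordering :=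
  (compare s.1.1 s.1.2, compare s.2.1 s.2.2)

/-- The indicator vectors `(([x ∈ A], [x ∈ B]), ([x ∈ L], [x ∈ R]))` of the coins `x` of a
configuration whose cells `A ∩ L`, `A ∩ R`, `A \ (L ∪ R)`, `B ∩ L`, `B ∩ R`, `B \ (L ∪ R)`,
`L \ (A ∪ B)`, `R \ (A ∪ B)` have the given sizes. -/
def cellWeights (a₁ a₂ a₀ b₁ b₂ b₀ l r : ℕ) : Multiset ((ℕ × ℕ) × (ℕ × ℕ)) :=
  .replicate a₁ ((1, 0), (1, 0)) + .replicate a₂ ((1, 0), (0, 1)) +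
  .replicate a₀ ((1, 0), (0, 0)) + .replicate b₁ ((0, 1), (1, 0)) +
  .replicate b₂ ((0, 1), (0, 1)) + .replicate b₀ ((0, 1), (0, 0)) +
  .replicate l ((0, 0), (1, 0)) + .replicate r ((0, 0), (0, 1))

set_option maxRecDepth 100000 in
theorem exists_le_mul_card_filter_subsetSums_cellWeights (a₁ a₂ a₀ b₁ b₂ b₀ l r : ℕ)
    (hA : a₁ + a₂ + a₀ = 3) (hB : b₁ + b₂ + b₀ = 3) (hL : a₁ + b₁ + l = 3)
    (hR : a₂ + b₂ + r = 3) :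
    ∃ v, 15 * 2 ^ Multiset.card (cellWeights a₁ a₂ a₀ b₁ b₂ b₀ l r) ≤
      128 * Multiset.card ((cellWeights a₁ a₂ a₀ b₁ b₂ b₀ l r).subsetSums.filter
        (pairSigns · = v)) := by
  have key : ∀ a₁ ∈ range 4, ∀ a₂ ∈ range 4, ∀ b₁ ∈ range 4, ∀ b₂ ∈ range 4,
      a₁ + a₂ ≤ 3 → b₁ + b₂ ≤ 3 → a₁ + b₁ ≤ 3 → a₂ + b₂ ≤ 3 →
      ∃ v, 15 * 2 ^ Multiset.card (cellWeights a₁ a₂ (3 - a₁ - a₂) b₁ b₂ (3 - b₁ - b₂)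
          (3 - a₁ - b₁) (3 - a₂ - b₂)) ≤
        128 * Multiset.card ((cellWeights a₁ a₂ (3 - a₁ - a₂) b₁ b₂ (3 - b₁ - b₂)
          (3 - a₁ - b₁) (3 - a₂ - b₂)).subsetSums.filter (pairSigns · = v)) := by
    decide
  obtain rfl : a₀ = 3 - a₁ - a₂ := by omega
  obtain rfl : b₀ = 3 - b₁ - b₂ := by omega
  obtain rfl : l = 3 - a₁ - b₁ := by omega
  obtain rfl : r = 3 - a₂ - b₂ := by omega
  exact key a₁ (mem_range.mpr (by omega)) a₂ (mem_range.mpr (by omega))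
    b₁ (mem_range.mpr (by omega)) b₂ (mem_range.mpr (by omega))
    (by omega) (by omega) (by omega) (by omega)

def indicatorGrid : Finset ((ℕ × ℕ) × (ℕ × ℕ)) :=
  ({(0, 0), (1, 0), (0, 1)} : Finset (ℕ × ℕ)) ×ˢ {(0, 0), (1, 0), (0, 1)}

theorem exists_eq_replicate_zero_add_cellWeights {m : Multiset ((ℕ × ℕ) × (ℕ × ℕ))}
    (hm : m.toFinset ⊆ indicatorGrid) :
    ∃ c₀ a₁ a₂ a₀ b₁ b₂ b₀ l r, m = .replicate c₀ 0 + cellWeights a₁ a₂ a₀ b₁ b₂ b₀ l r := by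
  refine ⟨m.count 0, m.count ((1, 0), (1, 0)), m.count ((1, 0), (0, 1)), m.count ((1, 0), (0, 0)),
    m.count ((0, 1), (1, 0)), m.count ((0, 1), (0, 1)), m.count ((0, 1), (0, 0)),
    m.count ((0, 0), (1, 0)), m.count ((0, 0), (0, 1)), ?_⟩
  conv_lhs => rw [Multiset.eq_sum_count_nsmul_of_toFinset_subset hm]
  simp only [indicatorGrid, Multiset.nsmul_singleton, sum_product, mem_insert, Prod.mk.injEq,
    zero_ne_one, one_ne_zero, and_true, and_false, and_self, mem_singleton, or_self,
    not_false_eq_true, sum_insert, sum_singleton, cellWeights]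
  rw [show (0 : (ℕ × ℕ) × (ℕ × ℕ)) = ((0, 0), (0, 0)) from rfl]
  abel

theorem exists_le_mul_card_filter_subsetSums_pairSigns {m : Multiset ((ℕ × ℕ) × (ℕ × ℕ))}
    (hm : m.toFinset ⊆ indicatorGrid) (hA : m.countP (·.1.1 = 1) = 3)
    (hB : m.countP (·.1.2 = 1) = 3) (hL : m.countP (·.2.1 = 1) = 3)
    (hR : m.countP (·.2.2 = 1) = 3) :
    ∃ v, 15 * 2 ^ Multiset.card m ≤ 128 * Multiset.card (m.subsetSums.filter (pairSigns · = v)) := by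
  obtain ⟨c₀, a₁, a₂, a₀, b₁, b₂, b₀, l, r, rfl⟩ := exists_eq_replicate_zero_add_cellWeights hm
  simp only [cellWeights, Multiset.countP_add, Multiset.countP_replicate, Prod.fst_zero,
    Prod.snd_zero, zero_ne_one, ↓reduceIte, add_zero, zero_add] at hA hB hL hR
  obtain ⟨v, hv⟩ := exists_le_mul_card_filter_subsetSums_cellWeights a₁ a₂ a₀ b₁ b₂ b₀ l r
    (by omega) (by omega) (by omega) (by omega)
  refine ⟨v, ?_⟩
  rw [Multiset.card_filter_subsetSums_replicate_zero_add, Multiset.card_add,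
    Multiset.card_replicate, pow_add]
  linarith [Nat.mul_le_mul_left (2 ^ c₀) hv]

section Weighings

variable {α : Type*} [DecidableEq α]

theorem weighOutcome_swap (A B X : Finset α) : weighOutcome B A X = (weighOutcome A B X).swap :=
  Std.OrientedOrd.eq_swap

theorem two_pow_le_two_mul_card_filter_weighOutcome_lt {S A B : Finset α} (hA : A ⊆ S)
    (hB : B ⊆ S) (h : #A < #B) :
    2 ^ #S ≤ 2 * #{X ∈ S.powerset | weighOutcome A B X = .lt} := by
  have hcompl_card : ∀ {C}, C ⊆ S → ∀ X, #((S \ X) ∩ C) = #C - #(X ∩ C) := fun hC X => by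
    rw [← card_sdiff, sdiff_inter_right_comm, inter_eq_right.mpr hC]
  have hle : #{X ∈ S.powerset | ¬weighOutcome A B X = .lt}
      ≤ #{X ∈ S.powerset | weighOutcome A B X = .lt} := by
    refine card_le_card_of_injOn (S \ ·) (fun X hX => ?_) (fun X hX Y hY hXY => ?_)
    · simp only [coe_filter, mem_powerset, Set.mem_ofPred_eq, weighOutcome,
        compare_lt_iff_lt, not_lt] at hX ⊢
      refine ⟨sdiff_subset, ?_⟩
      rw [hcompl_card hA, hcompl_card hB]
      have := card_le_card (inter_subset_right (s₁ := X) (s₂ := A))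
      have := card_le_card (inter_subset_right (s₁ := X) (s₂ := B))
      omega
    · simp only [coe_filter, mem_powerset, Set.mem_ofPred_eq] at hX hY
      rw [← Finset.sdiff_sdiff_eq_self hX.1, ← Finset.sdiff_sdiff_eq_self hY.1]
      exact congrArg (S \ ·) hXY
  have := card_filter_add_card_filter_not (s := S.powerset) (weighOutcome A B · = .lt)
  rw [card_powerset] at this
  omega

theorem exists_two_pow_le_two_mul_card_filter_weighOutcome {S A B : Finset α} (hA : A ⊆ S)
    (hB : B ⊆ S) (h : #A ≠ #B) :
    ∃ v, 2 ^ #S ≤ 2 * #{X ∈ S.powerset | weighOutcome A B X = v} := by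
  rcases h.lt_or_gt with h | h
  · exact ⟨.lt, two_pow_le_two_mul_card_filter_weighOutcome_lt hA hB h⟩
  · refine ⟨.gt, ?_⟩
    have := two_pow_le_two_mul_card_filter_weighOutcome_lt hB hA h
    simp only [weighOutcome_swap A B, Ordering.swap_eq_iff_eq_swap] at this
    exact this

open scoped symmDiff in
theorem card_filter_weighOutcome_eq_eq {S A B : Finset α} (hA : A ⊆ S) (hB : B ⊆ S)
    (hAB : Disjoint A B) (h : #A = #B) :
    #{X ∈ S.powerset | weighOutcome A B X = .eq} = (#A).centralBinom * 2 ^ (#S - 2 * #A) := by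
  -- `X ↦ X ∆ B` turns `|X ∩ A| = |X ∩ B|` into `|(X ∆ B) ∩ (A ∪ B)| = |A|`
  have hflip : ∀ X, #((X ∆ B) ∩ (A ∪ B)) = #(X ∩ A) + (#B - #(X ∩ B)) := by
    intro X
    have : (X ∆ B) ∩ (A ∪ B) = X ∩ A ∪ B \ X := by
      ext x
      simp only [mem_inter, mem_symmDiff, mem_union, mem_sdiff]
      have := @disjoint_left.mp hAB x
      tauto
    rw [this, card_union_of_disjoint (disjoint_sdiff.mono_left inter_subset_left), card_sdiff,
      inter_comm]
  have hsub : ∀ X ⊆ S, X ∆ B ⊆ S := fun X hX =>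
    symmDiff_le (hX.trans le_sup_right) (hB.trans le_sup_right)
  calc #{X ∈ S.powerset | weighOutcome A B X = .eq}
      = #{Y ∈ S.powerset | #(Y ∩ (A ∪ B)) = #A} := by
        refine card_nbij' (· ∆ B) (· ∆ B) ?_ ?_ ?_ ?_ <;>
          simp only [Set.MapsTo, Set.LeftInvOn, Set.RightInvOn, mem_coe, mem_filter, mem_powerset]
        · intro X ⟨hX, heq⟩
          rw [weighOutcome, compare_eq_iff_eq] at heq
          have := hflip X
          have := card_le_card (inter_subset_right (s₁ := X) (s₂ := B))
          exact ⟨hsub X hX, by omega⟩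
        · intro Y ⟨hY, hk⟩
          have hYB := hflip (Y ∆ B)
          rw [symmDiff_symmDiff_cancel_right] at hYB
          have := card_le_card (inter_subset_right (s₁ := Y ∆ B) (s₂ := B))
          exact ⟨hsub Y hY, compare_eq_iff_eq.mpr (by omega)⟩
        · exact fun X _ => symmDiff_symmDiff_cancel_right B X
        · exact fun X _ => symmDiff_symmDiff_cancel_right B X
    _ = (#A).centralBinom * 2 ^ (#S - 2 * #A) := by
        rw [card_filter_powerset_card_inter_eq (union_subset hA hB), card_union_of_disjoint hAB,
          ← h, ← two_mul, ← Nat.centralBinom_eq_two_mul_choose]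

theorem card_eq_three_of_forall_mul_card_filter_weighOutcome_lt {S A B : Finset α} (hA : A ⊆ S)
    (hB : B ⊆ S) (hAB : Disjoint A B)
    (h : ∀ v, 128 * #{X ∈ S.powerset | weighOutcome A B X = v} < 45 * 2 ^ #S) :
    #A = 3 ∧ #B = 3 := by
  have hbal : #A = #B := by
    by_contra hne
    obtain ⟨v, hv⟩ := exists_two_pow_le_two_mul_card_filter_weighOutcome hA hB hne
    have := h v
    omega
  have hpow : 2 ^ #S = 2 ^ (#S - 2 * #A) * 4 ^ #A := by
    have : #A + #B ≤ #S := card_union_of_disjoint hAB ▸ card_le_card (union_subset hA hB)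
    rw [show 4 = 2 ^ 2 by rfl, ← pow_mul, ← pow_add]
    congr 1
    omega
  have htotal := card_eq_card_filter_lt_add_eq_add_gt S.powerset (weighOutcome A B)
  have hlt := h .lt
  have heq := h .eq
  have hgt := h .gt
  rw [card_filter_weighOutcome_eq_eq hA hB hAB hbal] at heq htotal
  rw [card_powerset, hpow] at htotal
  rw [hpow] at hlt heq hgt
  have h3 : #A = 3 := by
    refine Nat.eq_three_of_centralBinom_bounds
      (Nat.lt_of_mul_lt_mul_left (a := 2 ^ (#S - 2 * #A)) ?_)
      (Nat.lt_of_mul_lt_mul_left (a := 2 ^ (#S - 2 * #A)) ?_) <;> linarith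
  exact ⟨h3, hbal ▸ h3⟩

def indicatorPair (A B : Finset α) (x : α) : ℕ × ℕ :=
  (if x ∈ A then 1 else 0, if x ∈ B then 1 else 0)

theorem sum_indicatorPair (A B X : Finset α) :
    ∑ x ∈ X, indicatorPair A B x = (#(X ∩ A), #(X ∩ B)) := by
  simp [indicatorPair, Prod.ext_iff, Prod.fst_sum, Prod.snd_sum]

theorem indicatorPair_mem {A B : Finset α} (hAB : Disjoint A B) (x : α) :
    indicatorPair A B x ∈ ({(0, 0), (1, 0), (0, 1)} : Finset (ℕ × ℕ)) := by
  have := @disjoint_left.mp hAB x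
  by_cases hA : x ∈ A <;> by_cases hB : x ∈ B <;> simp_all [indicatorPair]

theorem countP_map_val_eq_card {β : Type*} {S C : Finset α} (hC : C ⊆ S) (g : α → β)
    (p : β → Prop) [DecidablePred p] (hg : ∀ x, p (g x) ↔ x ∈ C) :
    (S.val.map g).countP p = #C := by
  rw [Multiset.countP_map, ← inter_eq_right.mpr hC, ← filter_mem_eq_inter, card_def, filter_val]
  exact congrArg Multiset.card (Multiset.filter_congr fun x _ => hg x)

theorem card_filter_weighOutcome_and_eq (S A B L R : Finset α) (v₁ v₂ : Ordering) :
    #{X ∈ S.powerset | weighOutcome A B X = v₁ ∧ weighOutcome L R X = v₂} =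
      Multiset.card ((S.val.map fun x => (indicatorPair A B x, indicatorPair L R x)).subsetSums.filter
        (pairSigns · = (v₁, v₂))) := by
  rw [← card_filter_powerset_sum]
  congr 1
  refine filter_congr fun X _ => ?_
  simp [pairSigns, Prod.fst_sum, Prod.snd_sum, sum_indicatorPair, weighOutcome]

theorem exists_le_mul_card_filter_weighOutcome_of_card_eq_three {S A B L R : Finset α}
    (hA : A ⊆ S) (hB : B ⊆ S) (hAB : Disjoint A B) (hL : L ⊆ S) (hR : R ⊆ S)
    (hLR : Disjoint L R) (hA3 : #A = 3) (hB3 : #B = 3) (hL3 : #L = 3) (hR3 : #R = 3) :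
    ∃ v₁ v₂, 15 * 2 ^ #S ≤
      128 * #{X ∈ S.powerset | weighOutcome A B X = v₁ ∧ weighOutcome L R X = v₂} := by
  obtain ⟨v, hv⟩ := exists_le_mul_card_filter_subsetSums_pairSigns
    (m := S.val.map fun x => (indicatorPair A B x, indicatorPair L R x))
    (fun v hv => by
      obtain ⟨x, -, rfl⟩ := Multiset.mem_map.mp (Multiset.mem_toFinset.mp hv)
      exact mem_product.mpr ⟨indicatorPair_mem hAB x, indicatorPair_mem hLR x⟩)
    (hA3 ▸ countP_map_val_eq_card hA _ _ fun x => by simp [indicatorPair])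
    (hB3 ▸ countP_map_val_eq_card hB _ _ fun x => by simp [indicatorPair])
    (hL3 ▸ countP_map_val_eq_card hL _ _ fun x => by simp [indicatorPair])
    (hR3 ▸ countP_map_val_eq_card hR _ _ fun x => by simp [indicatorPair])
  refine ⟨v.1, v.2, ?_⟩
  rw [card_filter_weighOutcome_and_eq]
  simpa using hv

theorem mul_card_filter_weighOutcome_lt {S A B L R : Finset α} {v₁ : Ordering} {c : ℕ}
    (h : ∀ v₂, 128 * #{X ∈ S.powerset | weighOutcome A B X = v₁ ∧ weighOutcome L R X = v₂} < c) :
    128 * #{X ∈ S.powerset | weighOutcome A B X = v₁} < 3 * c := by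
  have hsplit := card_eq_card_filter_lt_add_eq_add_gt {X ∈ S.powerset | weighOutcome A B X = v₁}
    (weighOutcome L R)
  simp only [filter_filter] at hsplit
  have := h .lt
  have := h .eq
  have := h .gt
  omega

end Weighings

/-- Lemma 2 of the paper (`ζ₂ ≥ 2 ^ n · 15 / 128`): for any finite set `S` with `|S| = n`
and any two weighings `(A, B)` and `(L, R)` on `S`, there are outcomes `v₁, v₂ ∈ {<, =, >}`
such that `128` times the number of subsets `X ⊆ S` whose outcome under `(A, B)` is `v₁`
and whose outcome under `(L, R)` is `v₂` is at least `15 · 2 ^ n`. -/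
theorem zeta_two_bound {α : Type*} [DecidableEq α]
    (S : Finset α) (n : ℕ) (hS : S.card = n)
    (A B L R : Finset α)
    (hA : A ⊆ S) (hB : B ⊆ S) (hAB : Disjoint A B)
    (hL : L ⊆ S) (hR : R ⊆ S) (hLR : Disjoint L R) :
    ∃ v₁ v₂ : Ordering,
      15 * 2 ^ n ≤ 128 * (S.powerset.filter
        (fun X => weighOutcome A B X = v₁ ∧ weighOutcome L R X = v₂)).card := by
  subst hS
  by_contra! h
  have hAB3 := card_eq_three_of_forall_mul_card_filter_weighOutcome_lt hA hB hAB fun v₁ => by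
    linarith [mul_card_filter_weighOutcome_lt (h v₁)]
  have h' : ∀ v₂ v₁, 128 * #{X ∈ S.powerset | weighOutcome L R X = v₂ ∧ weighOutcome A B X = v₁}
      < 15 * 2 ^ #S := fun v₂ v₁ => by simpa only [and_comm] using h v₁ v₂
  have hLR3 := card_eq_three_of_forall_mul_card_filter_weighOutcome_lt hL hR hLR fun v₂ => by
    linarith [mul_card_filter_weighOutcome_lt (h' v₂)]
  obtain ⟨v₁, v₂, hv⟩ := exists_le_mul_card_filter_weighOutcome_of_card_eq_three hA hB hAB hL hR
    hLR hAB3.1 hAB3.2 hLR3.1 hLR3.2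
  exact (h v₁ v₂).not_ge hv
end
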